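/- Let d ≥ 2 be an integer, 0 ≤ α ≤ 1, ν ∈ ℝ^d with ν ≠ 0, and define N(α, ν) = {(ω₁, ω₂) ∈ ℝ^{2d} : ⟨ω₁ − ω₂, ν⟩ ≥ α |ω₁ − ω₂| |ν|}, where points of ℝ^{2d} are written as (ω₁, ω₂) with ω₁, ω₂ ∈ ℝ^d. Then the (2d−1)-dimensional Hausdorff measure of 𝕊₁^{2d-1} ∩ N(α, ν) is at most C arccos(α) for a constant C > 0 depending only on d. -/

import Mathlib

open MeasureTheory

/-- First component `ω₁` of a point of ℝ^{2d} = ℝ^d × ℝ^d. -/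
noncomputable def projL {d : ℕ} (p : EuclideanSpace ℝ (Fin d ⊕ Fin d)) :
    EuclideanSpace ℝ (Fin d) := WithLp.toLp 2 (fun i => p (Sum.inl i))

/-- Second component `ω₂` of a point of ℝ^{2d} = ℝ^d × ℝ^d. -/
noncomputable def projR {d : ℕ} (p : EuclideanSpace ℝ (Fin d ⊕ Fin d)) :
    EuclideanSpace ℝ (Fin d) := WithLp.toLp 2 (fun i => p (Sum.inr i))

/-!
Write `u = ω₁ - ω₂` and pick a unit vector `f ⊥ ν`, which exists because `d ≥ 2`. On the cone,
`⟨u, ν⟩ ≥ α |u| |ν|` leaves at most `(1 - α²) |u|²` for `⟨u, f⟩²`, and `|u|² ≤ 2` on the unit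
sphere, so the set lies in the band `|⟨p, v⟩| ≤ √(1 - α²) = sin (arccos α) ≤ arccos α` around the
equator orthogonal to the unit vector `v = (f, -f) / √2`.

A band of half-width `θ` on the unit sphere of `ℝⁿ` has `(n-1)`-dimensional Hausdorff measure
`O(θ)`. Every point `x` of the sphere lies on one of the `2n` hemisphere graphs
`y ↦ (y, ±√(1 - |y|²))` over the coordinate hyperplane of a largest coordinate of `x`, with
`|y|² ≤ 1 - 1/n`; there these charts are `C¹`, hence Lipschitz, so they increase Hausdorff measure
by at most a constant factor over Lebesgue measure of the parameters. The parameters of band points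
lie in a box with one side `2θ`, except in the chart over the band's own axis, which meets the
band only when `θ ≥ 1/n`.
-/

open scoped NNReal ENNReal RealInnerProductSpace

section Boxes

variable {κ : Type*} [Fintype κ]

lemma volume_pi_Icc_neg_one_one :
    volume (Set.univ.pi fun _ : κ => Set.Icc (-1 : ℝ) 1) = 2 ^ Fintype.card κ := by
  simp only [volume_pi_pi, Real.volume_Icc, Finset.prod_const, Finset.card_univ]
  norm_num

lemma volume_pi_update_Icc [DecidableEq κ] (i₀ : κ) (θ : ℝ) :
    volume (Set.univ.pi (Function.update (fun _ => Set.Icc (-1 : ℝ) 1) i₀ (Set.Icc (-θ) θ)))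
      = ENNReal.ofReal (2 * θ) * 2 ^ (Fintype.card κ - 1) := by
  have hrest : ∀ i ∈ Finset.univ \ {i₀},
      volume (Function.update (fun _ => Set.Icc (-1 : ℝ) 1) i₀ (Set.Icc (-θ) θ) i) = 2 := by
    intro i hi
    rw [Function.update_of_ne (by simpa using hi), Real.volume_Icc]
    norm_num
  rw [volume_pi_pi, Finset.prod_eq_mul_prod_sdiff_singleton_of_mem (Finset.mem_univ i₀),
    Function.update_self, Real.volume_Icc, Finset.prod_congr rfl hrest, Finset.prod_const,
    Finset.card_sdiff_of_subset (by simp)]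
  simp [two_mul]

end Boxes

section SphereChart

variable {ι : Type*} [Fintype ι]

noncomputable def sphereChart [DecidableEq ι] (j : ι) (ε : ℝ) (y : {i // i ≠ j} → ℝ) :
    EuclideanSpace ℝ ι :=
  WithLp.toLp 2 fun i => if h : i = j then ε * √(1 - ‖WithLp.toLp 2 y‖ ^ 2) else y ⟨i, h⟩

lemma contDiffOn_sphereChart [DecidableEq ι] (j : ι) (ε : ℝ) {r : ℝ} (hr : r < 1) :
    ContDiffOn ℝ 1 (sphereChart j ε) (WithLp.toLp 2 ⁻¹' Metric.closedBall 0 r) := by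
  have hnorm : ContDiff ℝ 1 fun y : {i // i ≠ j} → ℝ => ‖WithLp.toLp 2 y‖ ^ 2 :=
    (contDiff_norm_sq ℝ).comp PiLp.contDiff_toLp
  have hroot : ContDiffOn ℝ 1 (fun y : {i // i ≠ j} → ℝ => √(1 - ‖WithLp.toLp 2 y‖ ^ 2))
      (WithLp.toLp 2 ⁻¹' Metric.closedBall 0 r) := by
    refine (contDiffOn_const.sub hnorm.contDiffOn).sqrt fun y hy => ?_
    have hy : ‖WithLp.toLp 2 y‖ ≤ r := by simpa using hy
    nlinarith [norm_nonneg (WithLp.toLp 2 y)]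
  refine PiLp.contDiff_toLp.comp_contDiffOn (contDiffOn_pi.2 fun i => ?_)
  by_cases h : i = j
  · simpa [h] using hroot.const_smul ε
  · simpa [h] using (contDiff_apply ℝ ℝ (⟨i, h⟩ : {i // i ≠ j})).contDiffOn

lemma exists_hausdorffMeasure_image_sphereChart_le [DecidableEq ι] (j : ι) (ε : ℝ) {r : ℝ}
    (hr : r < 1) :
    ∃ K : ℝ≥0, ∀ t ⊆ WithLp.toLp 2 ⁻¹' Metric.closedBall 0 r,
      μH[(Fintype.card ι - 1 : ℕ)] (sphereChart j ε '' t) ≤ K * volume t := by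
  set D : Set ({i // i ≠ j} → ℝ) := WithLp.toLp 2 ⁻¹' Metric.closedBall 0 r
  have hconvex : Convex ℝ D :=
    (convex_closedBall (0 : EuclideanSpace ℝ {i // i ≠ j}) r).linear_preimage
      (EuclideanSpace.equiv _ ℝ).symm.toLinearMap
  have hcompact : IsCompact D :=
    (EuclideanSpace.equiv _ ℝ).symm.toHomeomorph.isCompact_preimage.2 (isCompact_closedBall _ _)
  obtain ⟨L, hL⟩ :=
    (contDiffOn_sphereChart j ε hr).exists_lipschitzOnWith one_ne_zero hconvex hcompact
  have hcard : Fintype.card {i // i ≠ j} = Fintype.card ι - 1 := by simp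
  refine ⟨L ^ (Fintype.card ι - 1), fun t ht => ?_⟩
  have := (hL.mono ht).hausdorffMeasure_image_le (d := (Fintype.card ι - 1 : ℕ))
    (Nat.cast_nonneg _)
  rwa [ENNReal.rpow_natCast, ← hcard, hausdorffMeasure_pi_real, hcard, ← ENNReal.coe_pow] at this

lemma norm_toLp_restrict_sq [DecidableEq ι] {x : EuclideanSpace ℝ ι} (hx : ‖x‖ = 1) (j : ι) :
    ‖WithLp.toLp 2 (fun i : {i // i ≠ j} => x i)‖ ^ 2 = 1 - x j ^ 2 := by
  have h := EuclideanSpace.real_norm_sq_eq x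
  rw [hx, Fintype.sum_eq_add_sum_subtype_ne _ j] at h
  rw [EuclideanSpace.real_norm_sq_eq]
  linarith

lemma exists_sphereChart_restrict_eq [DecidableEq ι] {x : EuclideanSpace ℝ ι} (hx : ‖x‖ = 1)
    (j : ι) :
    ∃ ε ∈ ({1, -1} : Set ℝ), sphereChart j ε (fun i => x i) = x := by
  have hroot : √(1 - ‖WithLp.toLp 2 (fun i : {i // i ≠ j} => x i)‖ ^ 2) = |x j| := by
    rw [norm_toLp_restrict_sq hx, sub_sub_cancel, Real.sqrt_sq_eq_abs]
  have hchart (ε : ℝ) (hε : ε * |x j| = x j) : sphereChart j ε (fun i => x i) = x := by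
    ext i
    by_cases h : i = j
    · subst h; simp [sphereChart, hroot, hε]
    · simp [sphereChart, h]
  rcases le_or_gt 0 (x j) with h | h
  · exact ⟨1, by simp, hchart 1 (by rw [abs_of_nonneg h, one_mul])⟩
  · exact ⟨-1, by simp, hchart (-1) (by rw [abs_of_neg h]; ring)⟩

lemma exists_one_le_card_mul_sq [Nonempty ι] {x : EuclideanSpace ℝ ι} (hx : ‖x‖ = 1) :
    ∃ j, 1 ≤ Fintype.card ι * x j ^ 2 := by
  obtain ⟨j, -, hj⟩ := Finset.univ.exists_max_image (fun i => x i ^ 2) Finset.univ_nonempty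
  refine ⟨j, ?_⟩
  have h := EuclideanSpace.real_norm_sq_eq x
  rw [hx, one_pow] at h
  rw [h, ← nsmul_eq_mul]
  exact Finset.sum_le_card_nsmul _ _ _ fun i _ => hj i (Finset.mem_univ i)

lemma norm_toLp_restrict_le [DecidableEq ι] {x : EuclideanSpace ℝ ι} (hx : ‖x‖ = 1) {j : ι}
    (hj : 1 ≤ Fintype.card ι * x j ^ 2) :
    ‖WithLp.toLp 2 (fun i : {i // i ≠ j} => x i)‖ ≤ √(1 - (Fintype.card ι : ℝ)⁻¹) := by
  have hm : (1 : ℝ) ≤ Fintype.card ι := Nat.one_le_cast.2 (Fintype.card_pos_iff.2 ⟨j⟩)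
  rw [Real.le_sqrt (norm_nonneg _) (by linarith [inv_le_one_of_one_le₀ hm]),
    norm_toLp_restrict_sq hx]
  linarith [(inv_le_iff_one_le_mul₀' (by linarith)).2 hj]

lemma exists_hausdorffMeasure_le_of_forall_restrict_mem [DecidableEq ι] [Nonempty ι] :
    ∃ A : ℝ≥0, ∀ (s : Set (EuclideanSpace ℝ ι)) (T : (j : ι) → Set ({i // i ≠ j} → ℝ))
      (V : ℝ≥0∞), (∀ x ∈ s, ‖x‖ = 1) →
      (∀ x ∈ s, ∀ j, 1 ≤ Fintype.card ι * x j ^ 2 → (fun i : {i // i ≠ j} => x i) ∈ T j) →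
      (∀ j, volume (T j) ≤ V) → μH[(Fintype.card ι - 1 : ℕ)] s ≤ A * V := by
  set m := Fintype.card ι
  have hm : (0 : ℝ) < m := Nat.cast_pos.2 Fintype.card_pos
  set r := √(1 - (m : ℝ)⁻¹)
  have hr : r < 1 := (Real.sqrt_lt' one_pos).2 (by simp [hm])
  choose K hK using fun j ε => exists_hausdorffMeasure_image_sphereChart_le (ι := ι) j ε hr
  refine ⟨∑ j, (K j 1 + K j (-1)), fun s T V hs hT hV => ?_⟩
  set D : (j : ι) → Set ({i // i ≠ j} → ℝ) := fun _ => WithLp.toLp 2 ⁻¹' Metric.closedBall 0 r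
  have hcover :
      s ⊆ ⋃ j, (sphereChart j 1 '' (D j ∩ T j) ∪ sphereChart j (-1) '' (D j ∩ T j)) := by
    intro x hx
    obtain ⟨j, hxj⟩ := exists_one_le_card_mul_sq (hs x hx)
    have hD : (fun i : {i // i ≠ j} => x i) ∈ D j := by
      simpa [D] using norm_toLp_restrict_le (hs x hx) hxj
    obtain ⟨ε, hε, hεx⟩ := exists_sphereChart_restrict_eq (hs x hx) j
    refine Set.mem_iUnion.2 ⟨j, ?_⟩
    rcases hε with rfl | rfl
    · exact Or.inl ⟨_, ⟨hD, hT x hx j hxj⟩, hεx⟩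
    · exact Or.inr ⟨_, ⟨hD, hT x hx j hxj⟩, hεx⟩
  have hpiece (j : ι) (ε : ℝ) : μH[(m - 1 : ℕ)] (sphereChart j ε '' (D j ∩ T j)) ≤ K j ε * V :=
    (hK j ε _ Set.inter_subset_left).trans
      (by gcongr; exact (measure_mono Set.inter_subset_right).trans (hV j))
  calc μH[(m - 1 : ℕ)] s
      ≤ ∑ j, μH[(m - 1 : ℕ)]
          (sphereChart j 1 '' (D j ∩ T j) ∪ sphereChart j (-1) '' (D j ∩ T j)) :=
        (measure_mono hcover).trans (measure_iUnion_fintype_le _ _)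
    _ ≤ ∑ j, ((K j 1 : ℝ≥0∞) * V + K j (-1) * V) :=
        Finset.sum_le_sum fun j _ =>
          (measure_union_le _ _).trans (add_le_add (hpiece j 1) (hpiece j (-1)))
    _ = (∑ j, (K j 1 + K j (-1)) : ℝ≥0) * V := by
        simp only [← add_mul, ← Finset.sum_mul]; push_cast; rfl

/-- Contains the parameters of every band point `x` in the chart over `x j = 0` once
`x j ^ 2 ≥ 1 / card ι`; for `j = k` that happens only if `θ ^ 2 ≥ 1 / card ι`. -/
def bandParams (k : ι) (θ : ℝ) (j : ι) : Set ({i // i ≠ j} → ℝ) :=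
  {y | (∀ i, |y i| ≤ 1) ∧ (∀ i : {i // i ≠ j}, (i : ι) = k → |y i| ≤ θ) ∧
    (j = k → 1 ≤ Fintype.card ι * θ ^ 2)}

lemma volume_bandParams_le [DecidableEq ι] (k : ι) {θ : ℝ} (hθ0 : 0 ≤ θ) (hθ1 : θ ≤ 1)
    (j : ι) :
    volume (bandParams k θ j) ≤ 2 ^ Fintype.card ι * ENNReal.ofReal (2 * (Fintype.card ι * θ)) := by
  set m := Fintype.card ι
  have hm : (1 : ℝ) ≤ m := Nat.one_le_cast.2 (Fintype.card_pos_iff.2 ⟨k⟩)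
  have hcard : Fintype.card {i // i ≠ j} ≤ m := Fintype.card_subtype_le _
  by_cases hjk : j = k
  · by_cases hθ : 1 ≤ m * θ ^ 2
    · have hsub : bandParams k θ j ⊆ Set.univ.pi fun _ => Set.Icc (-1) 1 :=
        fun y hy i _ => abs_le.1 (hy.1 i)
      have hmθ : 1 ≤ 2 * (m * θ) := by
        have hθ2 : θ ^ 2 ≤ θ := by nlinarith
        nlinarith [mul_le_mul_of_nonneg_left hθ2 (by positivity : (0 : ℝ) ≤ m)]
      calc volume (bandParams k θ j)
          ≤ 2 ^ Fintype.card {i // i ≠ j} :=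
            (measure_mono hsub).trans_eq volume_pi_Icc_neg_one_one
        _ ≤ 2 ^ m * 1 := by rw [mul_one]; exact pow_le_pow_right₀ one_le_two hcard
        _ ≤ 2 ^ m * ENNReal.ofReal (2 * (m * θ)) := by gcongr; exact ENNReal.one_le_ofReal.2 hmθ
    · have hempty : bandParams k θ j = ∅ :=
        Set.eq_empty_of_forall_notMem fun y hy => hθ (hy.2.2 hjk)
      simp only [hempty, measure_empty, zero_le]
  · set i₀ : {i // i ≠ j} := ⟨k, Ne.symm hjk⟩
    have hsub : bandParams k θ j ⊆
        Set.univ.pi (Function.update (fun _ => Set.Icc (-1) 1) i₀ (Set.Icc (-θ) θ)) := by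
      intro y hy i _
      by_cases hi : i = i₀
      · subst hi; simpa using abs_le.1 (hy.2.1 i₀ rfl)
      · simpa [hi] using abs_le.1 (hy.1 i)
    calc volume (bandParams k θ j)
        ≤ ENNReal.ofReal (2 * θ) * 2 ^ (Fintype.card {i // i ≠ j} - 1) :=
          (measure_mono hsub).trans_eq (volume_pi_update_Icc i₀ θ)
      _ ≤ 2 ^ m * ENNReal.ofReal (2 * (m * θ)) := by
          rw [mul_comm]
          gcongr
          · exact one_le_two
          · exact (Nat.sub_le _ _).trans hcard
          · exact le_mul_of_one_le_left hθ0 hm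

theorem exists_hausdorffMeasure_band_le (k : ι) :
    ∃ C > 0, ∀ θ : ℝ, 0 ≤ θ → θ ≤ 1 →
      μH[(Fintype.card ι - 1 : ℕ)] {x : EuclideanSpace ℝ ι | ‖x‖ = 1 ∧ |x k| ≤ θ}
        ≤ ENNReal.ofReal (C * θ) := by
  classical
  have : Nonempty ι := ⟨k⟩
  set m := Fintype.card ι
  have hm : (0 : ℝ) < m := Nat.cast_pos.2 Fintype.card_pos
  obtain ⟨A, hA⟩ := exists_hausdorffMeasure_le_of_forall_restrict_mem (ι := ι)
  refine ⟨(A + 1) * (2 ^ m * (2 * m)), by positivity, fun θ hθ0 hθ1 => ?_⟩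
  have hmem : ∀ x ∈ {x : EuclideanSpace ℝ ι | ‖x‖ = 1 ∧ |x k| ≤ θ}, ∀ j,
      1 ≤ m * x j ^ 2 → (fun i : {i // i ≠ j} => x i) ∈ bandParams k θ j := by
    rintro x ⟨hx, hxk⟩ j hj
    refine ⟨fun i => hx ▸ PiLp.norm_apply_le x i, fun i hi => ?_, fun hjk => ?_⟩
    · rwa [← hi] at hxk
    · subst hjk
      exact hj.trans
        (mul_le_mul_of_nonneg_left (sq_le_sq' (abs_le.1 hxk).1 (abs_le.1 hxk).2) hm.le)
  refine (hA _ _ _ (fun x hx => hx.1) hmem (volume_bandParams_le k hθ0 hθ1)).trans ?_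
  rw [← ENNReal.ofReal_coe_nnreal, ← ENNReal.ofReal_ofNat 2, ← ENNReal.ofReal_pow zero_le_two,
    ← ENNReal.ofReal_mul (by positivity), ← ENNReal.ofReal_mul A.coe_nonneg]
  refine ENNReal.ofReal_le_ofReal ?_
  have : 0 ≤ 2 ^ m * (2 * (m * θ)) := by positivity
  nlinarith

end SphereChart

section InnerProductSpace

variable {E : Type*} [NormedAddCommGroup E] [InnerProductSpace ℝ E]

theorem exists_hausdorffMeasure_sphere_inter_abs_inner_le [FiniteDimensional ℝ E]
    [MeasurableSpace E] [BorelSpace E] (hE : 0 < Module.finrank ℝ E) :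
    ∃ C > 0, ∀ v : E, ‖v‖ = 1 → ∀ θ : ℝ, 0 ≤ θ → θ ≤ 1 →
      μH[(Module.finrank ℝ E - 1 : ℕ)] {p : E | ‖p‖ = 1 ∧ |⟪p, v⟫| ≤ θ}
        ≤ ENNReal.ofReal (C * θ) := by
  set n := Module.finrank ℝ E
  set k : Fin n := ⟨0, hE⟩
  obtain ⟨C, hC, hband⟩ := exists_hausdorffMeasure_band_le k
  refine ⟨C, hC, fun v hv θ hθ0 hθ1 => ?_⟩
  have hv' : Orthonormal ℝ (({k} : Set (Fin n)).domRestrict fun _ => v) :=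
    orthonormal_subsingleton_iff.2 fun _ => hv
  obtain ⟨b, hb⟩ := hv'.exists_orthonormalBasis_extension_of_card_eq (by simp [n])
  have hpre : {p : E | ‖p‖ = 1 ∧ |⟪p, v⟫| ≤ θ}
      = b.repr ⁻¹' {x | ‖x‖ = 1 ∧ |x k| ≤ θ} := by
    ext p
    simp [b.repr_apply_apply, hb k rfl, real_inner_comm]
  rw [hpre]
  exact (b.repr.toIsometryEquiv.hausdorffMeasure_preimage _ _).trans_le
    (by simpa [n] using hband θ hθ0 hθ1)

lemma exists_norm_eq_one_inner_eq_zero [FiniteDimensional ℝ E] (hE : 2 ≤ Module.finrank ℝ E)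
    (ν : E) : ∃ f : E, ‖f‖ = 1 ∧ ⟪f, ν⟫ = 0 := by
  have hpos : 0 < Module.finrank ℝ (ℝ ∙ ν)ᗮ := by
    have hsum := (ℝ ∙ ν).finrank_add_finrank_orthogonal
    have hspan := finrank_span_le_card (R := ℝ) ({ν} : Set E)
    simp only [Set.toFinset_singleton, Finset.card_singleton] at hspan
    omega
  obtain ⟨w, hw⟩ := Module.finrank_pos_iff_exists_ne_zero.1 hpos
  refine ⟨‖(w : E)‖⁻¹ • (w : E), norm_smul_inv_norm (by simpa using hw), ?_⟩
  rw [real_inner_smul_left, Submodule.mem_orthogonal_singleton_iff_inner_left.1 w.2, mul_zero]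

lemma inner_sq_le_of_le_inner {u ν f : E} {α : ℝ} (hν : ν ≠ 0) (hf : ‖f‖ = 1)
    (hfν : ⟪f, ν⟫ = 0) (hα : 0 ≤ α) (hu : α * ‖u‖ * ‖ν‖ ≤ ⟪u, ν⟫) :
    ⟪u, f⟫ ^ 2 ≤ (1 - α ^ 2) * ‖u‖ ^ 2 := by
  have hν2 : 0 < ‖ν‖ ^ 2 := by positivity
  set a := ⟪u, ν⟫ / ‖ν‖ ^ 2
  have hproj : 0 ≤ ‖u - a • ν - ⟪u, f⟫ • f‖ ^ 2 := sq_nonneg _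
  have hexp :
      ‖u - a • ν - ⟪u, f⟫ • f‖ ^ 2 = ‖u‖ ^ 2 - ⟪u, ν⟫ ^ 2 / ‖ν‖ ^ 2 - ⟪u, f⟫ ^ 2 := by
    have hff : ⟪f, f⟫ = 1 := by rw [real_inner_self_eq_norm_sq, hf, one_pow]
    have hνf : ⟪ν, f⟫ = 0 := by rw [real_inner_comm, hfν]
    rw [← real_inner_self_eq_norm_sq, ← real_inner_self_eq_norm_sq u]
    simp only [inner_sub_left, inner_sub_right, real_inner_smul_left, real_inner_smul_right, hff,
      hfν, hνf, real_inner_comm u ν, real_inner_comm u f, real_inner_self_eq_norm_sq ν, a]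
    field_simp
    ring
  have hcone : α ^ 2 * ‖u‖ ^ 2 ≤ ⟪u, ν⟫ ^ 2 / ‖ν‖ ^ 2 := by
    rw [le_div_iff₀ hν2]
    nlinarith [pow_le_pow_left₀ (by positivity) hu 2]
  nlinarith

end InnerProductSpace

section Antidiagonal

variable {d : ℕ}

noncomputable def antidiag (w : EuclideanSpace ℝ (Fin d)) : EuclideanSpace ℝ (Fin d ⊕ Fin d) :=
  WithLp.toLp 2 (Sum.elim (fun i => w i) fun i => -w i)

lemma inner_antidiag (p : EuclideanSpace ℝ (Fin d ⊕ Fin d)) (w : EuclideanSpace ℝ (Fin d)) :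
    ⟪p, antidiag w⟫ = ⟪projL p - projR p, w⟫ := by
  simp [antidiag, projL, projR, PiLp.inner_apply, Fintype.sum_sum_type, sub_eq_add_neg, mul_add,
    Finset.sum_add_distrib]

lemma norm_antidiag (w : EuclideanSpace ℝ (Fin d)) : ‖antidiag w‖ = √2 * ‖w‖ := by
  rw [← Real.sqrt_sq (norm_nonneg _), EuclideanSpace.real_norm_sq_eq,
    ← Real.sqrt_sq (norm_nonneg w), EuclideanSpace.real_norm_sq_eq, ← Real.sqrt_mul zero_le_two]
  simp [antidiag, Fintype.sum_sum_type, two_mul]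

lemma norm_projL_sub_projR_sq_le (p : EuclideanSpace ℝ (Fin d ⊕ Fin d)) :
    ‖projL p - projR p‖ ^ 2 ≤ 2 * ‖p‖ ^ 2 := by
  rw [EuclideanSpace.real_norm_sq_eq, EuclideanSpace.real_norm_sq_eq, Fintype.sum_sum_type,
    ← Finset.sum_add_distrib, Finset.mul_sum]
  refine Finset.sum_le_sum fun i _ => ?_
  simp only [projL, projR, PiLp.sub_apply]
  nlinarith [sq_nonneg (p (Sum.inl i) + p (Sum.inr i))]

lemma sphere_inter_cone_subset {ν f : EuclideanSpace ℝ (Fin d)} {α : ℝ} (hν : ν ≠ 0)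
    (hf : ‖f‖ = 1) (hfν : ⟪f, ν⟫ = 0) (hα0 : 0 ≤ α) (hα1 : α ≤ 1) :
    Metric.sphere 0 1 ∩ {p | α * ‖projL p - projR p‖ * ‖ν‖ ≤ ⟪projL p - projR p, ν⟫}
      ⊆ {p | ‖p‖ = 1 ∧ |⟪p, (√2)⁻¹ • antidiag f⟫| ≤ √(1 - α ^ 2)} := by
  rintro p ⟨hp, hcone⟩
  rw [mem_sphere_zero_iff_norm] at hp
  refine ⟨hp, Real.abs_le_sqrt ?_⟩
  have hu := inner_sq_le_of_le_inner hν hf hfν hα0 hcone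
  have h2 := norm_projL_sub_projR_sq_le p
  rw [hp] at h2
  rw [real_inner_smul_right, inner_antidiag, mul_pow, inv_pow, Real.sq_sqrt zero_le_two]
  nlinarith [mul_le_mul_of_nonneg_left h2 (by nlinarith : 0 ≤ 1 - α ^ 2)]

end Antidiagonal

theorem stmt_8 (d : ℕ) (hd : 2 ≤ d) :
    ∃ C > 0, ∀ α : ℝ, 0 ≤ α → α ≤ 1 →
      ∀ ν : EuclideanSpace ℝ (Fin d), ν ≠ 0 →
        μH[2 * (d : ℝ) - 1] (Metric.sphere (0 : EuclideanSpace ℝ (Fin d ⊕ Fin d)) 1 ∩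
              {p | α * ‖projL p - projR p‖ * ‖ν‖ ≤ (inner ℝ (projL p - projR p) ν : ℝ)})
            ≤ ENNReal.ofReal (C * Real.arccos α) := by
  have hrank : Module.finrank ℝ (EuclideanSpace ℝ (Fin d ⊕ Fin d)) = d + d := by simp
  have hdim :
      2 * (d : ℝ) - 1 = (Module.finrank ℝ (EuclideanSpace ℝ (Fin d ⊕ Fin d)) - 1 : ℕ) := by
    rw [hrank, Nat.cast_sub (by omega)]; push_cast; ring
  obtain ⟨C, hC, hband⟩ := exists_hausdorffMeasure_sphere_inter_abs_inner_le
    (E := EuclideanSpace ℝ (Fin d ⊕ Fin d)) (by omega)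
  refine ⟨C, hC, fun α hα0 hα1 ν hν => ?_⟩
  obtain ⟨f, hf, hfν⟩ := exists_norm_eq_one_inner_eq_zero (by simpa using hd) ν
  have hv : ‖(√2)⁻¹ • antidiag f‖ = 1 := by
    rw [norm_smul, norm_antidiag, hf, mul_one, norm_inv,
      Real.norm_of_nonneg (Real.sqrt_nonneg 2), inv_mul_cancel₀ (by positivity)]
  have hθ : √(1 - α ^ 2) ≤ Real.arccos α := by
    rw [← Real.sin_arccos]; exact Real.sin_le (Real.arccos_nonneg α)
  rw [hdim]
  calc _ ≤ _ := measure_mono (sphere_inter_cone_subset hν hf hfν hα0 hα1)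
    _ ≤ ENNReal.ofReal (C * √(1 - α ^ 2)) :=
      hband _ hv _ (Real.sqrt_nonneg _) (Real.sqrt_le_one.2 (by nlinarith))
    _ ≤ ENNReal.ofReal (C * Real.arccos α) := by gcongr
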